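/- Let F : R × R^N × S^N → R be continuous, degenerate elliptic, nonincreasing in u for nonnegative u, and independent of x. Let U ⊆ R^N be open and satisfy: for all φ ∈ C²(R^N) and x̂ ∈ R^N \ U with φ ≤ φ(x̂) = 0 on R^N \ U one has F(φ(x̂), Dφ(x̂), D²φ(x̂)) ≤ 0. Then the distance function v(x) = dist(x, R^N \ U) is a continuous nonnegative viscosity supersolution of F(v, Dv, D²v) = 0 on R^N with U = {x : v(x) > 0}. -/

import Mathlib

/-!
Write `d = dist(·, ℝ^N \ U)` and let `z` be a point of `ℝ^N \ U` nearest to `x̂`. If `d - φ` has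
a local minimum at `x̂`, then `φ (· + (x̂ - z)) - φ x̂` is `≤ 0` near `z` on `ℝ^N \ U`, because
there `d (y + x̂ - z) ≤ |x̂ - z| = d x̂`. Cutting it off with a bump function equal to `1` near `z`
gives a test function for the geometric condition at `z` with the same gradient and Hessian as `φ`
at `x̂`, and monotonicity of `F` in `u ≥ 0` then passes from `F (0, …)` to `F (d x̂, …)`.
-/

open Classical in
/-- Eigenvalues of a real symmetric matrix arranged in nondecreasing order
(junk value `0` if the matrix is not symmetric). -/
noncomputable def sortedEig {N : ℕ} (A : Matrix (Fin N) (Fin N) ℝ) : Fin N → ℝ :=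
  if h : A.IsHermitian then h.eigenvalues ∘ ⇑(Tuple.sort h.eigenvalues) else 0

/-- `P_k^-(A)`: the sum of the `k` smallest eigenvalues of `A`. -/
noncomputable def sumMinEig {N : ℕ} (k : ℕ) (A : Matrix (Fin N) (Fin N) ℝ) : ℝ :=
  ∑ i ∈ Finset.univ.filter (fun i : Fin N => (i : ℕ) < k), sortedEig A i

/-- The Hessian matrix of `φ` at `x`. -/
noncomputable def hess {N : ℕ} (φ : EuclideanSpace ℝ (Fin N) → ℝ)
    (x : EuclideanSpace ℝ (Fin N)) : Matrix (Fin N) (Fin N) ℝ :=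
  fun i j => iteratedFDeriv ℝ 2 φ x ![EuclideanSpace.single i 1, EuclideanSpace.single j 1]

open Metric Set Filter Topology

def IsViscositySupersolution {N : ℕ}
    (F : ℝ → EuclideanSpace ℝ (Fin N) → Matrix (Fin N) (Fin N) ℝ → ℝ)
    (v : EuclideanSpace ℝ (Fin N) → ℝ) : Prop :=
  ∀ φ : EuclideanSpace ℝ (Fin N) → ℝ, ContDiff ℝ 2 φ →
    ∀ xh, IsLocalMin (fun y => v y - φ y) xh → F (v xh) (gradient φ xh) (hess φ xh) ≤ 0

section Derivatives

variable {E F : Type*} [NormedAddCommGroup E] [NormedSpace ℝ E]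
  [NormedAddCommGroup F] [NormedSpace ℝ F]

theorem iteratedFDeriv_sub_const {n : ℕ} (hn : n ≠ 0) (f : E → F) (c : F) (x : E) :
    iteratedFDeriv ℝ n (fun y => f y - c) x = iteratedFDeriv ℝ n f x := by
  obtain ⟨k, rfl⟩ := Nat.exists_eq_succ_of_ne_zero hn
  simp only [iteratedFDeriv_succ_eq_comp_right, fderiv_sub_const]

end Derivatives

section Gradient

variable {H : Type*} [NormedAddCommGroup H] [InnerProductSpace ℝ H] [CompleteSpace H]

theorem gradient_sub_const (f : H → ℝ) (c : ℝ) (x : H) :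
    gradient (fun y => f y - c) x = gradient f x := by
  simp only [gradient, fderiv_sub_const]

theorem gradient_comp_add_right (f : H → ℝ) (v x : H) :
    gradient (fun y => f (y + v)) x = gradient f (x + v) := by
  simp only [gradient, fderiv_comp_add_right]

end Gradient

section Hessian

variable {N : ℕ} {φ ψ : EuclideanSpace ℝ (Fin N) → ℝ} {x : EuclideanSpace ℝ (Fin N)}

theorem Filter.EventuallyEq.hess_eq (h : ψ =ᶠ[𝓝 x] φ) : hess ψ x = hess φ x := by
  ext i j
  simp only [hess, (h.iteratedFDeriv ℝ 2).eq_of_nhds]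

theorem hess_sub_const (c : ℝ) : hess (fun y => φ y - c) x = hess φ x := by
  ext i j
  simp only [hess, iteratedFDeriv_sub_const two_ne_zero]

theorem hess_comp_add_right (v : EuclideanSpace ℝ (Fin N)) :
    hess (fun y => φ (y + v)) x = hess φ (x + v) := by
  ext i j
  simp only [hess, iteratedFDeriv_comp_add_right]

end Hessian

theorem exists_contDiff_eventuallyEq_forall_nonpos {E : Type*} [NormedAddCommGroup E]
    [NormedSpace ℝ E] [HasContDiffBump E] {n : ℕ∞} {g : E → ℝ} {S : Set E} {z : E}
    (hg : ContDiff ℝ n g) (hS : ∀ᶠ y in 𝓝 z, y ∈ S → g y ≤ 0) :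
    ∃ ψ : E → ℝ, ContDiff ℝ n ψ ∧ ψ =ᶠ[𝓝 z] g ∧ ∀ y ∈ S, ψ y ≤ 0 := by
  obtain ⟨ε, hε, hball⟩ := eventually_nhds_iff_ball.mp hS
  let χ : ContDiffBump z := ⟨ε / 2, ε, half_pos hε, half_lt_self hε⟩
  refine ⟨fun y => χ y * g y, χ.contDiff.mul hg, ?_, fun y hy => ?_⟩
  · filter_upwards [closedBall_mem_nhds z (half_pos hε)] with y hy
    simp [χ.one_of_mem_closedBall hy]
  · by_cases hyz : dist y z < ε
    · exact mul_nonpos_of_nonneg_of_nonpos χ.nonneg (hball y (mem_ball.mpr hyz) hy)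
    · simp [χ.zero_of_le_dist (not_lt.mp hyz)]

theorem eventually_le_of_isLocalMin_infDist_sub {E : Type*} [SeminormedAddCommGroup E]
    {S : Set E} {φ : E → ℝ} {xh z : E} (hmin : IsLocalMin (fun y => infDist y S - φ y) xh)
    (hz : infDist xh S = dist xh z) :
    ∀ᶠ y in 𝓝 z, y ∈ S → φ (y + (xh - z)) ≤ φ xh := by
  have hshift : Tendsto (fun y => y + (xh - z)) (𝓝 z) (𝓝 xh) := by
    simpa using (continuous_add_const (xh - z)).tendsto z
  filter_upwards [hshift.eventually hmin] with y hy hyS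
  have hdist : infDist (y + (xh - z)) S ≤ infDist xh S := by
    calc infDist (y + (xh - z)) S ≤ dist (y + (xh - z)) y := infDist_le_dist_of_mem hyS
      _ = infDist xh S := by rw [dist_eq_norm, add_sub_cancel_left, hz, dist_eq_norm]
  linarith

theorem isViscositySupersolution_infDist_compl {N : ℕ}
    (F : ℝ → EuclideanSpace ℝ (Fin N) → Matrix (Fin N) (Fin N) ℝ → ℝ)
    (hmonou : ∀ (u : ℝ) (p : EuclideanSpace ℝ (Fin N)) (X : Matrix (Fin N) (Fin N) ℝ),
      0 ≤ u → F u p X ≤ F 0 p X)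
    {U : Set (EuclideanSpace ℝ (Fin N))} (hUopen : IsOpen U) (hUne : U ≠ univ)
    (hG : ∀ φ : EuclideanSpace ℝ (Fin N) → ℝ, ContDiff ℝ 2 φ →
      ∀ xh ∉ U, (∀ x ∉ U, φ x ≤ 0) → φ xh = 0 →
        F (φ xh) (gradient φ xh) (hess φ xh) ≤ 0) :
    IsViscositySupersolution F (fun x => infDist x Uᶜ) := by
  intro φ hφ xh hmin
  obtain ⟨z, hzU, hz⟩ :=
    hUopen.isClosed_compl.exists_infDist_eq_dist (nonempty_compl.mpr hUne) xh
  have hzxh : z + (xh - z) = xh := add_sub_cancel z xh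
  have hshift : ContDiff ℝ 2 fun y => φ (y + (xh - z)) - φ xh :=
    (hφ.comp (contDiff_id.add contDiff_const)).sub contDiff_const
  obtain ⟨ψ, hψ, hψφ, hψU⟩ := exists_contDiff_eventuallyEq_forall_nonpos (S := Uᶜ) hshift
    ((eventually_le_of_isLocalMin_infDist_sub hmin hz).mono fun _ h hy => sub_nonpos.mpr (h hy))
  have hψz : ψ z = 0 := by simp [hψφ.eq_of_nhds, hzxh]
  have hGz := hG ψ hψ z hzU hψU hψz
  rw [hψz, hψφ.gradient_eq, hψφ.hess_eq, gradient_sub_const, gradient_comp_add_right,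
    hess_sub_const, hess_comp_add_right, hzxh] at hGz
  exact (hmonou _ _ _ infDist_nonneg).trans hGz

theorem stmt8_general {N : ℕ}
    (F : ℝ → EuclideanSpace ℝ (Fin N) → Matrix (Fin N) (Fin N) ℝ → ℝ)
    (hmonou : ∀ (u : ℝ) (p : EuclideanSpace ℝ (Fin N)) (X : Matrix (Fin N) (Fin N) ℝ),
      0 ≤ u → F u p X ≤ F 0 p X)
    (U : Set (EuclideanSpace ℝ (Fin N))) (hUopen : IsOpen U) (hUne : U ≠ Set.univ)
    (hG : ∀ φ : EuclideanSpace ℝ (Fin N) → ℝ, ContDiff ℝ 2 φ →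
      ∀ xh ∉ U, (∀ x ∉ U, φ x ≤ 0) → φ xh = 0 →
        F (φ xh) (gradient φ xh) (hess φ xh) ≤ 0) :
    Continuous (fun x => Metric.infDist x Uᶜ) ∧
      (∀ x, 0 ≤ Metric.infDist x Uᶜ) ∧
      (∀ φ : EuclideanSpace ℝ (Fin N) → ℝ, ContDiff ℝ 2 φ →
        ∀ xh, IsLocalMin (fun y => Metric.infDist y Uᶜ - φ y) xh →
          F (Metric.infDist xh Uᶜ) (gradient φ xh) (hess φ xh) ≤ 0) ∧
      U = {x | 0 < Metric.infDist x Uᶜ} := by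
  refine ⟨continuous_infDist_pt _, fun _ => infDist_nonneg,
    isViscositySupersolution_infDist_compl F hmonou hUopen hUne hG, ?_⟩
  ext x
  simpa using hUopen.isClosed_compl.notMem_iff_infDist_pos (nonempty_compl.mpr hUne) (x := x)

/-- If an open set `U ⊆ ℝ^N` satisfies the geometric condition (G_{F,U}),
then `v(x) = dist(x, ℝ^N \ U)` is a continuous nonnegative viscosity
supersolution of `F(v, Dv, D²v) = 0` on `ℝ^N` with positivity set `U`. -/
theorem stmt8 {N : ℕ}
    (F : ℝ → EuclideanSpace ℝ (Fin N) → Matrix (Fin N) (Fin N) ℝ → ℝ)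
    (hFc : Continuous fun q : ℝ × EuclideanSpace ℝ (Fin N) × Matrix (Fin N) (Fin N) ℝ =>
      F q.1 q.2.1 q.2.2)
    (hell : ∀ (u : ℝ) (p : EuclideanSpace ℝ (Fin N)) (X Y : Matrix (Fin N) (Fin N) ℝ),
      X.IsHermitian → Y.IsHermitian → (Y - X).PosSemidef → F u p X ≤ F u p Y)
    (hmonou : ∀ (u : ℝ) (p : EuclideanSpace ℝ (Fin N)) (X : Matrix (Fin N) (Fin N) ℝ),
      0 ≤ u → F u p X ≤ F 0 p X)
    (U : Set (EuclideanSpace ℝ (Fin N))) (hUopen : IsOpen U) (hUne : U ≠ Set.univ)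
    (hG : ∀ φ : EuclideanSpace ℝ (Fin N) → ℝ, ContDiff ℝ 2 φ →
      ∀ xh ∉ U, (∀ x ∉ U, φ x ≤ 0) → φ xh = 0 →
        F (φ xh) (gradient φ xh) (hess φ xh) ≤ 0) :
    Continuous (fun x => Metric.infDist x Uᶜ) ∧
      (∀ x, 0 ≤ Metric.infDist x Uᶜ) ∧
      (∀ φ : EuclideanSpace ℝ (Fin N) → ℝ, ContDiff ℝ 2 φ →
        ∀ xh, IsLocalMin (fun y => Metric.infDist y Uᶜ - φ y) xh →
          F (Metric.infDist xh Uᶜ) (gradient φ xh) (hess φ xh) ≤ 0) ∧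
      U = {x | 0 < Metric.infDist x Uᶜ} :=
  stmt8_general F hmonou U hUopen hUne hG
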